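/- Kummer's transformation: for the confluent hypergeometric function of the first kind, {}_1F_1(a; c; z) = e^z · {}_1F_1(c - a; c; -z), for all complex z and parameters a, c with c not a nonpositive integer. -/

import Mathlib

/-!
Multiply the exponential series by the series of `₁F₁(c - a; c; -z)` (Cauchy product; both
converge absolutely by the ratio test). After clearing `n! (c)ₙ`, the coefficient of `zⁿ` is
`∑_{i+j=n} C(n,i) (-1)ʲ (c-a)ⱼ (c+j)ᵢ`, which is `(a)ₙ` by the Chu–Vandermonde identity for
falling factorials evaluated at `c + n - 1` and `a - c`.
-/

/-- The confluent hypergeometric function of the first kind `₁F₁(a; c; z)`. -/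
noncomputable def oneF1 (a c z : ℂ) : ℂ :=
  ∑' k : ℕ, ((ascPochhammer ℂ k).eval a / (ascPochhammer ℂ k).eval c) *
    z ^ k / (Nat.factorial k : ℂ)

open Finset Polynomial Filter Topology Nat

theorem descPochhammer_eval_add {R : Type*} [CommRing R] (r s : R) (n : ℕ) :
    (descPochhammer R n).eval (r + s) = ∑ ij ∈ antidiagonal n,
      n.choose ij.1 * (descPochhammer R ij.1).eval r * (descPochhammer R ij.2).eval s := by
  have h_eval (k : ℕ) (x : R) :
      (descPochhammer R k).eval x = (descPochhammer ℤ k).smeval x := by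
    rw [← descPochhammer_map (Int.castRingHom R), eval_map, ← aeval_eq_smeval, aeval_def,
      algebraMap_int_eq]
  simp only [h_eval, Ring.descPochhammer_smeval_add n (Commute.all r s), mul_assoc]

theorem ascPochhammer_eval_sub_eq_sum {R : Type*} [CommRing R] (b c : R) (n : ℕ) :
    (ascPochhammer R n).eval (c - b) = ∑ ij ∈ antidiagonal n,
      n.choose ij.1 * (-1) ^ ij.2 * (ascPochhammer R ij.2).eval b *
        (ascPochhammer R ij.1).eval (c + ij.2) := by
  have hsum := descPochhammer_eval_add (c + n - 1) (-b) n
  rw [descPochhammer_eval_eq_ascPochhammer, show c + n - 1 + -b - n + 1 = c - b by ring] at hsum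
  rw [hsum]
  refine sum_congr rfl fun ⟨i, j⟩ hij => ?_
  obtain rfl : n = i + j := (mem_antidiagonal.mp hij).symm
  have hsign : ((-1 : R) ^ j) ^ 2 = 1 := by rw [← pow_mul, mul_comm, pow_mul]; simp
  have hb := ascPochhammer_eval_neg_eq_descPochhammer R (-b) j
  rw [neg_neg] at hb
  dsimp only
  rw [descPochhammer_eval_eq_ascPochhammer,
    show c + ↑(i + j) - 1 - i + 1 = c + j by push_cast; ring, hb]
  linear_combination (-((i + j).choose i : R) * (descPochhammer R j).eval (-b) *
    (ascPochhammer R i).eval (c + j)) * hsign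

theorem ascPochhammer_add_eval {R : Type*} [CommSemiring R] (c : R) (i j : ℕ) :
    (ascPochhammer R (j + i)).eval c =
      (ascPochhammer R j).eval c * (ascPochhammer R i).eval (c + j) := by
  rw [← ascPochhammer_mul, eval_mul, eval_comp]
  simp

theorem ascPochhammer_eval_ne_zero {R : Type*} [CommRing R] [IsDomain R] {c : R}
    (hc : ∀ n : ℕ, c ≠ -(n : R)) (n : ℕ) : (ascPochhammer R n).eval c ≠ 0 := by
  rw [ne_eq, ascPochhammer_eval_eq_zero_iff]
  rintro ⟨k, -, hk⟩
  exact hc k (by rw [hk, neg_neg])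

noncomputable def oneF1Term (a c z : ℂ) (k : ℕ) : ℂ :=
  (ascPochhammer ℂ k).eval a / (ascPochhammer ℂ k).eval c * z ^ k / (k ! : ℂ)

theorem oneF1_eq_tsum (a c z : ℂ) : oneF1 a c z = ∑' k, oneF1Term a c z k := rfl

-- No hypothesis on `c`: a vanishing denominator makes both sides `0`, as `x / 0 = 0`.
theorem oneF1Term_succ (a c z : ℂ) (k : ℕ) :
    oneF1Term a c z (k + 1) = oneF1Term a c z k * ((a + k) / (c + k) * (z / (k + 1))) := by
  simp only [oneF1Term, ascPochhammer_succ_eval, pow_succ, factorial_succ, cast_mul, cast_succ,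
    div_eq_mul_inv, mul_inv]
  ring

theorem tendsto_oneF1Term_ratio (a c z : ℂ) :
    Tendsto (fun k : ℕ => (a + k) / (c + k) * (z / (k + 1))) atTop (𝓝 0) := by
  have hfrac : Tendsto (fun k : ℕ => (a + 1 * k) / (c + 1 * k)) atTop (𝓝 (1 / 1)) :=
    tendsto_add_mul_div_add_mul_atTop_nhds a c 1 one_ne_zero
  have hz : Tendsto (fun k : ℕ => z * (1 / ((k : ℂ) + 1))) atTop (𝓝 (z * 0)) :=
    tendsto_one_div_add_atTop_nhds_zero_nat.const_mul z
  simpa [div_eq_mul_inv] using hfrac.mul hz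

theorem summable_norm_oneF1Term (a c z : ℂ) : Summable fun k => ‖oneF1Term a c z k‖ := by
  refine summable_of_ratio_norm_eventually_le (r := 1 / 2) (by norm_num) ?_
  filter_upwards [(tendsto_oneF1Term_ratio a c z).norm.eventually_le_const
    (show ‖(0 : ℂ)‖ < 1 / 2 by norm_num)] with k hk
  rw [norm_norm, norm_norm, oneF1Term_succ, norm_mul, mul_comm]
  exact mul_le_mul_of_nonneg_right hk (norm_nonneg _)

theorem sum_antidiagonal_exp_mul_oneF1Term (a c z : ℂ) {n : ℕ}
    (hc : (ascPochhammer ℂ n).eval c ≠ 0) :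
    ∑ ij ∈ antidiagonal n, z ^ ij.1 / ij.1 ! * oneF1Term (c - a) c (-z) ij.2 =
      oneF1Term a c z n := by
  have hterm : ∀ ij ∈ antidiagonal n, z ^ ij.1 / ij.1 ! * oneF1Term (c - a) c (-z) ij.2 =
      n.choose ij.1 * (-1) ^ ij.2 * (ascPochhammer ℂ ij.2).eval (c - a) *
        (ascPochhammer ℂ ij.1).eval (c + ij.2) *
        (z ^ n / (n ! * (ascPochhammer ℂ n).eval c)) := by
    rintro ⟨i, j⟩ hij
    obtain rfl : n = i + j := (mem_antidiagonal.mp hij).symm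
    have hsplit := ascPochhammer_add_eval c i j
    rw [add_comm j i] at hsplit
    rw [hsplit, mul_ne_zero_iff] at hc
    have hfact : ((i + j) ! : ℂ) = (i + j).choose i * i ! * j ! := by
      rw [choose_symm_add]
      exact_mod_cast (add_choose_mul_factorial_mul_factorial i j).symm
    have hchoose : ((i + j).choose i : ℂ) ≠ 0 := by
      exact_mod_cast (choose_pos (le_add_right i j)).ne'
    rw [hsplit, hfact, oneF1Term, neg_pow, pow_add]
    field_simp [hc.1, hc.2]
  rw [sum_congr rfl hterm, ← sum_mul, ← ascPochhammer_eval_sub_eq_sum, sub_sub_cancel, oneF1Term]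
  field_simp

/-- Kummer's transformation: `₁F₁(a; c; z) = e^z ₁F₁(c-a; c; -z)` when `c` is not
a nonpositive integer. -/
theorem kummer_transformation (a c z : ℂ) (hc : ∀ n : ℕ, c ≠ -(n : ℂ)) :
    oneF1 a c z = Complex.exp z * oneF1 (c - a) c (-z) := by
  rw [Complex.exp_eq_exp_ℂ, ← (NormedSpace.expSeries_div_hasSum_exp z).tsum_eq, oneF1_eq_tsum,
    oneF1_eq_tsum, tsum_mul_tsum_eq_tsum_sum_antidiagonal_of_summable_norm
      (NormedSpace.norm_expSeries_div_summable z) (summable_norm_oneF1Term _ _ _)]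
  exact tsum_congr fun n =>
    (sum_antidiagonal_exp_mul_oneF1Term a c z (ascPochhammer_eval_ne_zero hc n)).symm
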